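/- Work in the coordinate model with smooth Hamiltonian H(x^i,u^α,p^i_α), closed 1-form θ = θ_i(x)dx^i on ℝ^m, and (Ω_θ)_h = Ω_h + θ∧Θ_h. A smooth section φ(x) = (x^i, φ^α(x), φ^i_α(x)) of J¹π* → ℝ^m satisfies φ*(ι_X (Ω_θ)_h) = 0 for every smooth vector field X on J¹π* if and only if φ satisfies the locally conformal Hamilton–De Donder–Weyl equations: ∂φ^α/∂x^i = (∂H/∂p^i_α)∘φ for all i, α, and Σ_i ∂φ^i_α/∂x^i = −(∂H/∂u^α)∘φ + θ_i φ^i_α for all α. -/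

import Mathlib

open scoped BigOperators

noncomputable section

/-- A raw `k`-cochain on `E`: a scalar function of a point and `k` tangent vectors.
Smooth differential `k`-forms are regarded as such cochains by evaluation. -/
abbrev Coch (E : Type) (k : ℕ) : Type := E → (Fin k → E) → ℝ

/-- The (componentwise) exterior derivative of a `k`-cochain:
`(dω)(x)(v₀,…,v_k) = ∑ⱼ (-1)ʲ ∂_{vⱼ}(y ↦ ω(y)(v₀,…,v̂ⱼ,…,v_k))(x)`. -/
noncomputable def extDer {E : Type} [NormedAddCommGroup E] [NormedSpace ℝ E] {k : ℕ}
    (ω : Coch E k) : Coch E (k + 1) := fun x v =>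
  ∑ j : Fin (k + 1),
    (-1 : ℝ) ^ (j : ℕ) * fderiv ℝ (fun y => ω y (v ∘ j.succAbove)) x (v j)

/-- Wedge product of a 1-cochain with a `k`-cochain:
`(θ∧ω)(x)(v₀,…,v_k) = ∑ⱼ (-1)ʲ θ(x)(vⱼ) ω(x)(v₀,…,v̂ⱼ,…,v_k)`. -/
def wedge1 {E : Type} {k : ℕ} (θ : Coch E 1) (ω : Coch E k) : Coch E (k + 1) := fun x v =>
  ∑ j : Fin (k + 1), (-1 : ℝ) ^ (j : ℕ) * θ x (fun _ => v j) * ω x (v ∘ j.succAbove)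

/-- Interior product (contraction) of a cochain with a vector field. -/
def iotaV {E : Type} {k : ℕ} (X : E → E) (ω : Coch E (k + 1)) : Coch E k := fun x v =>
  ω x (Fin.cons (X x) v)

/-- Pullback of a cochain along a (smooth) map. -/
noncomputable def pullC {E F : Type} [NormedAddCommGroup E] [NormedSpace ℝ E]
    [NormedAddCommGroup F] [NormedSpace ℝ F] {k : ℕ}
    (f : F → E) (ω : Coch E k) : Coch F k := fun x v =>
  ω (f x) fun a => fderiv ℝ f x (v a)

/-- The differential of a function, as a 1-cochain. -/
noncomputable def dFun {E : Type} [NormedAddCommGroup E] [NormedSpace ℝ E]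
    (H : E → ℝ) : Coch E 1 := fun q v => fderiv ℝ H q (v 0)

/-! ## The coordinate model of first-order Hamiltonian field theory

The base is `ℝ^m` with coordinates `xⁱ`, the configuration bundle is `E = ℝ^m × ℝ^N` with
fibre coordinates `u^α`, and the reduced multimomentum bundle is
`J¹π* = ℝ^m × ℝ^N × ℝ^{mN}` with coordinates `(xⁱ, u^α, pⁱ_α)`. -/

/-- `J¹π* = ℝ^m × ℝ^N × ℝ^{mN}` in coordinates `(xⁱ, u^α, pⁱ_α)`. -/
abbrev Jb (m N : ℕ) : Type := (Fin m → ℝ) × (Fin N → ℝ) × (Fin m → Fin N → ℝ)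

/-- The coordinate volume form `d_mx = dx¹∧⋯∧dx^m` on `J¹π*`. -/
def dmxJ (m N : ℕ) : Coch (Jb m N) m := fun _ v => Matrix.det (Matrix.of fun a b => (v b).1 a)

/-- The coordinate 1-form `du^α` on `J¹π*`. -/
def duJ (m N : ℕ) (α : Fin N) : Coch (Jb m N) 1 := fun _ v => (v 0).2.1 α

/-- The coordinate 1-form `dpⁱ_α` on `J¹π*`. -/
def dpJ (m N : ℕ) (i : Fin m) (α : Fin N) : Coch (Jb m N) 1 := fun _ v => (v 0).2.2 i α

/-- The coordinate vector `∂/∂xⁱ` on `J¹π*`. -/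
def XdirJ (m N : ℕ) (i : Fin m) : Jb m N := (Pi.single i 1, 0, 0)

/-- The coordinate vector `∂/∂u^α` on `J¹π*`. -/
def UdirJ (m N : ℕ) (α : Fin N) : Jb m N := (0, Pi.single α 1, 0)

/-- The coordinate vector `∂/∂pⁱ_α` on `J¹π*`. -/
def PdirJ (m N : ℕ) (i : Fin m) (α : Fin N) : Jb m N := (0, 0, Pi.single i (Pi.single α 1))

/-- The `m`-form `du^α ∧ (∂_i ⌟ d_mx) = -(∂_i ⌟ (du^α ∧ d_mx))` on `J¹π*`. -/
def duContr (m N : ℕ) (α : Fin N) (i : Fin m) : Coch (Jb m N) m := fun q v =>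
  -(iotaV (fun _ => XdirJ m N i) (wedge1 (duJ m N α) (dmxJ m N)) q v)

/-- The Hamiltonian `(m+1)`-form `Ω_h = dH∧d_mx − dpⁱ_α∧du^α∧(∂_i⌟d_mx)` on `J¹π*`. -/
noncomputable def OmegaH (m N : ℕ) (H : Jb m N → ℝ) : Coch (Jb m N) (m + 1) := fun q v =>
  wedge1 (dFun H) (dmxJ m N) q v -
    ∑ i : Fin m, ∑ α : Fin N, wedge1 (dpJ m N i α) (duContr m N α i) q v

/-- The `m`-form `Θ_h = −H d_mx + pⁱ_α du^α∧(∂_i⌟d_mx)` on `J¹π*`. -/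
noncomputable def ThetaHc (m N : ℕ) (H : Jb m N → ℝ) : Coch (Jb m N) m := fun q v =>
  -(H q) * dmxJ m N q v + ∑ i : Fin m, ∑ α : Fin N, q.2.2 i α * duContr m N α i q v

/-- The pullback to `J¹π*` of the 1-form `ϑ = ϑ_i(x) dxⁱ` on the base. -/
def thJ (m N : ℕ) (ϑ : (Fin m → ℝ) → Fin m → ℝ) : Coch (Jb m N) 1 := fun q v =>
  ∑ i : Fin m, ϑ q.1 i * (v 0).1 i

/-- The locally conformal Hamiltonian `(m+1)`-form `(Ω_θ)_h = Ω_h + θ∧Θ_h` on `J¹π*`. -/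
noncomputable def OmegaThH (m N : ℕ) (H : Jb m N → ℝ) (ϑ : (Fin m → ℝ) → Fin m → ℝ) :
    Coch (Jb m N) (m + 1) := fun q v =>
  OmegaH m N H q v + wedge1 (thJ m N ϑ) (ThetaHc m N H) q v

/-- The section `φ(x) = (x, φ^α(x), φⁱ_α(x))` of `J¹π* → ℝ^m`. -/
def secJ (m N : ℕ) (φ : (Fin m → ℝ) → Fin N → ℝ) (P : (Fin m → ℝ) → Fin m → Fin N → ℝ) :
    (Fin m → ℝ) → Jb m N := fun x => (x, φ x, P x)

/-- Closedness of the 1-form `ϑ_i(x) dxⁱ` on `ℝ^m`, in coordinates. -/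
def ClosedOneForm (m : ℕ) (ϑ : (Fin m → ℝ) → Fin m → ℝ) : Prop :=
  ∀ (x : Fin m → ℝ) (i j : Fin m),
    fderiv ℝ (fun y => ϑ y i) x (Pi.single j 1) = fderiv ℝ (fun y => ϑ y j) x (Pi.single i 1)

/-- The Hamilton–De Donder–Weyl equations in coordinates:
`∂φ^α/∂xⁱ = ∂H/∂pⁱ_α ∘ φ` and `∑ᵢ ∂φⁱ_α/∂xⁱ = −∂H/∂u^α ∘ φ`. -/
def HDWeq (m N : ℕ) (H : Jb m N → ℝ) (φ : (Fin m → ℝ) → Fin N → ℝ)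
    (P : (Fin m → ℝ) → Fin m → Fin N → ℝ) : Prop :=
  (∀ (x : Fin m → ℝ) (i : Fin m) (α : Fin N),
      fderiv ℝ φ x (Pi.single i 1) α = fderiv ℝ H (secJ m N φ P x) (PdirJ m N i α)) ∧
  (∀ (x : Fin m → ℝ) (α : Fin N),
      (∑ i : Fin m, fderiv ℝ P x (Pi.single i 1) i α) =
        -(fderiv ℝ H (secJ m N φ P x) (UdirJ m N α)))

/-- The locally conformal Hamilton–De Donder–Weyl equations in coordinates:
`∂φ^α/∂xⁱ = ∂H/∂pⁱ_α ∘ φ` and `∑ᵢ ∂φⁱ_α/∂xⁱ = −∂H/∂u^α ∘ φ + ϑ_i φⁱ_α`. -/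
def lcHDWeq (m N : ℕ) (H : Jb m N → ℝ) (ϑ : (Fin m → ℝ) → Fin m → ℝ)
    (φ : (Fin m → ℝ) → Fin N → ℝ) (P : (Fin m → ℝ) → Fin m → Fin N → ℝ) : Prop :=
  (∀ (x : Fin m → ℝ) (i : Fin m) (α : Fin N),
      fderiv ℝ φ x (Pi.single i 1) α = fderiv ℝ H (secJ m N φ P x) (PdirJ m N i α)) ∧
  (∀ (x : Fin m → ℝ) (α : Fin N),
      (∑ i : Fin m, fderiv ℝ P x (Pi.single i 1) i α) =
        -(fderiv ℝ H (secJ m N φ P x) (UdirJ m N α)) + ∑ i : Fin m, ϑ x i * P x i α)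

/-!
At a point `q`, `(Ω_θ)_h` is an alternating `(m+1)`-form, since it is built from `d_mx` by
wedging with 1-forms and contracting with vectors. Hence `φ*(ι_X (Ω_θ)_h)` at `x` is a multiple
of `dx¹∧⋯∧dx^m` and vanishes iff `(Ω_θ)_h(X, E₁, …, E_m) = 0` for the lifted frame
`E_a = Tφ(∂_a)`. This is linear in `X` and vanishes at `X = E_a` by alternation, so only the
vertical directions `∂/∂u^α`, `∂/∂pⁱ_α` matter. Expanding with `ι_w (θ∧ω) = θ(w) ω - θ∧ι_w ω`
and the duality of `∂_i ⌟ d_mx` with `dxⁱ` on the frame, those two values are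
`∂H/∂pⁱ_α - ∂_iφ^α` and `∂H/∂u^α + ∂_iφⁱ_α - θ_i φⁱ_α`.
-/

section Cochain

variable {E : Type}

theorem wedge1_cons {k : ℕ} (θ : Coch E 1) (ω : Coch E (k + 1)) (x w : E)
    (v : Fin (k + 1) → E) :
    wedge1 θ ω x (Fin.cons w v) = θ x (fun _ => w) * ω x v -
      ∑ j : Fin (k + 1),
        (-1 : ℝ) ^ (j : ℕ) * θ x (fun _ => v j) * ω x (Fin.cons w (v ∘ j.succAbove)) := by
  have hcomp : ∀ j : Fin (k + 1),
      (Fin.cons w v : Fin (k + 2) → E) ∘ j.succ.succAbove = Fin.cons w (v ∘ j.succAbove) := by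
    intro j; funext r
    refine Fin.cases ?_ (fun r => ?_) r <;> simp
  rw [wedge1, Fin.sum_univ_succ, sub_eq_add_neg, ← Finset.sum_neg_distrib]
  simp only [Fin.val_zero, pow_zero, one_mul, Fin.cons_zero, Fin.succAbove_zero]
  congr 1
  refine Finset.sum_congr rfl fun j _ => ?_
  rw [hcomp, Fin.cons_succ, Fin.val_succ, pow_succ]
  ring

variable [AddCommGroup E] [Module ℝ E]

def IsAltAt {k : ℕ} (ω : Coch E k) (x : E) : Prop :=
  ∃ A : E [⋀^Fin k]→ₗ[ℝ] ℝ, ∀ v, ω x v = A v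

variable {k : ℕ} {x : E}

theorem IsAltAt.add {ω η : Coch E k} (hω : IsAltAt ω x) (hη : IsAltAt η x) :
    IsAltAt (fun y v => ω y v + η y v) x := by
  obtain ⟨A, hA⟩ := hω; obtain ⟨B, hB⟩ := hη
  exact ⟨A + B, fun v => by simp [hA, hB]⟩

theorem IsAltAt.neg {ω : Coch E k} (hω : IsAltAt ω x) : IsAltAt (fun y v => -ω y v) x := by
  obtain ⟨A, hA⟩ := hω
  exact ⟨-A, fun v => by simp [hA]⟩

theorem IsAltAt.sub {ω η : Coch E k} (hω : IsAltAt ω x) (hη : IsAltAt η x) :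
    IsAltAt (fun y v => ω y v - η y v) x := by
  simpa only [sub_eq_add_neg] using hω.add hη.neg

theorem IsAltAt.const_mul {ω : Coch E k} (c : E → ℝ) (hω : IsAltAt ω x) :
    IsAltAt (fun y v => c y * ω y v) x := by
  obtain ⟨A, hA⟩ := hω
  exact ⟨c x • A, fun v => by simp [hA]⟩

theorem IsAltAt.sum {ι : Type} (s : Finset ι) {ω : ι → Coch E k}
    (hω : ∀ i ∈ s, IsAltAt (ω i) x) : IsAltAt (fun y v => ∑ i ∈ s, ω i y v) x := by
  classical
  induction s using Finset.induction_on with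
  | empty => exact ⟨0, fun v => by simp⟩
  | insert i s hi ih =>
    simp only [Finset.sum_insert hi]
    exact (hω i (by simp)).add (ih fun j hj => hω j (by simp [hj]))

theorem IsAltAt.iotaV {ω : Coch E (k + 1)} (X : E → E) (hω : IsAltAt ω x) :
    IsAltAt (iotaV X ω) x := by
  obtain ⟨A, hA⟩ := hω
  exact ⟨A.curryLeft (X x), fun v => by simp [_root_.iotaV, hA, Matrix.vecCons]⟩

theorem IsAltAt.wedge1 {θ : Coch E 1} {ω : Coch E k} (hω : IsAltAt ω x)
    (hθ : IsLinearMap ℝ fun w => θ x fun _ => w) :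
    IsAltAt (wedge1 θ ω) x := by
  obtain ⟨A, hA⟩ := hω
  refine ⟨AlternatingMap.alternatizeUncurryFin ((IsLinearMap.mk' _ hθ).smulRight A), fun v => ?_⟩
  simp [_root_.wedge1, AlternatingMap.alternatizeUncurryFin_apply, hA, mul_assoc]
  rfl

end Cochain

theorem AlternatingMap.eq_zero_iff_apply_pi_single {R : Type*} [CommRing R] {n : ℕ}
    (g : (Fin n → R) [⋀^Fin n]→ₗ[R] R) : g = 0 ↔ g (fun a => Pi.single a 1) = 0 := by
  refine ⟨fun h => by simp [h], fun h => ?_⟩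
  have hbasis : ⇑(Pi.basisFun R (Fin n)) = fun a => Pi.single a 1 :=
    funext (Pi.basisFun_apply R (Fin n))
  rw [g.eq_smul_basis_det (Pi.basisFun R (Fin n)), hbasis, h, zero_smul]

theorem forall_pullC_iotaV_eq_zero_iff {E : Type} [NormedAddCommGroup E] [NormedSpace ℝ E]
    {m : ℕ} (f : (Fin m → ℝ) → E) (ω : Coch E (m + 1)) (hω : ∀ y, IsAltAt ω y) :
    (∀ X : E → E, ContDiff ℝ (⊤ : ℕ∞) X →
      ∀ (x : Fin m → ℝ) (v : Fin m → Fin m → ℝ), pullC f (iotaV X ω) x v = 0) ↔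
    ∀ (x : Fin m → ℝ) (w : E), ω (f x) (Fin.cons w fun a => fderiv ℝ f x (Pi.single a 1)) = 0 := by
  have key : ∀ (X : E → E) (x : Fin m → ℝ), (∀ v, pullC f (iotaV X ω) x v = 0) ↔
      ω (f x) (Fin.cons (X (f x)) fun a => fderiv ℝ f x (Pi.single a 1)) = 0 := by
    intro X x
    obtain ⟨A, hA⟩ := hω (f x)
    set g := (A.curryLeft (X (f x))).compLinearMap (fderiv ℝ f x : (Fin m → ℝ) →ₗ[ℝ] E)
    have hg : ∀ v, pullC f (iotaV X ω) x v = g v := fun v => by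
      simp [g, pullC, iotaV, hA, Matrix.vecCons]
    have hbasis : ω (f x) (Fin.cons (X (f x)) fun a => fderiv ℝ f x (Pi.single a 1)) =
        g fun a => Pi.single a 1 := by
      simp [g, hA, Matrix.vecCons]
    simp only [hg, hbasis, ← AlternatingMap.eq_zero_iff_apply_pi_single]
    exact ⟨fun h => AlternatingMap.ext fun v => by simp [h], fun h v => by simp [h]⟩
  exact ⟨fun h x w => (key (fun _ => w) x).1 (h _ contDiff_const x),
    fun h X _ x => (key X x).2 (h x _)⟩

section Coordinates

variable {m N : ℕ}

theorem isAltAt_dmxJ (q : Jb m N) : IsAltAt (dmxJ m N) q :=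
  ⟨Matrix.detRowAlternating.compLinearMap (LinearMap.fst ℝ _ _), fun v => by
    rw [dmxJ, ← Matrix.det_transpose]; rfl⟩

theorem isLinearMap_dFun (H : Jb m N → ℝ) (q : Jb m N) :
    IsLinearMap ℝ fun w => dFun H q fun _ => w :=
  (fderiv ℝ H q).toLinearMap.isLinear

theorem isLinearMap_duJ (α : Fin N) (q : Jb m N) :
    IsLinearMap ℝ fun w => duJ m N α q fun _ => w :=
  ⟨fun _ _ => rfl, fun _ _ => rfl⟩

theorem isLinearMap_dpJ (i : Fin m) (α : Fin N) (q : Jb m N) :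
    IsLinearMap ℝ fun w => dpJ m N i α q fun _ => w :=
  ⟨fun _ _ => rfl, fun _ _ => rfl⟩

theorem isLinearMap_thJ (ϑ : (Fin m → ℝ) → Fin m → ℝ) (q : Jb m N) :
    IsLinearMap ℝ fun w => thJ m N ϑ q fun _ => w :=
  ⟨fun _ _ => by simp [thJ, mul_add, Finset.sum_add_distrib],
    fun _ _ => by simp [thJ, Finset.mul_sum, mul_left_comm]⟩

theorem isAltAt_duContr (α : Fin N) (i : Fin m) (q : Jb m N) : IsAltAt (duContr m N α i) q :=
  (((isAltAt_dmxJ q).wedge1 (isLinearMap_duJ α q)).iotaV _).neg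

theorem isAltAt_OmegaThH (H : Jb m N → ℝ) (ϑ : (Fin m → ℝ) → Fin m → ℝ) (q : Jb m N) :
    IsAltAt (OmegaThH m N H ϑ) q := by
  have hΩ : IsAltAt (OmegaH m N H) q :=
    ((isAltAt_dmxJ q).wedge1 (isLinearMap_dFun H q)).sub <|
      IsAltAt.sum _ fun i _ => IsAltAt.sum _ fun α _ =>
        (isAltAt_duContr α i q).wedge1 (isLinearMap_dpJ i α q)
  have hΘ : IsAltAt (ThetaHc m N H) q :=
    ((isAltAt_dmxJ q).const_mul fun y => -H y).add <|
      IsAltAt.sum _ fun i _ => IsAltAt.sum _ fun α _ =>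
        (isAltAt_duContr α i q).const_mul fun y => y.2.2 i α
  exact hΩ.add (hΘ.wedge1 (isLinearMap_thJ ϑ q))

theorem dmxJ_eq_one (q : Jb m N) {F : Fin m → Jb m N} (hF : ∀ b, (F b).1 = Pi.single b 1) :
    dmxJ m N q F = 1 := by
  have : Matrix.of (fun a b => (F b).1 a) = 1 := by
    ext a b; simp [hF, Pi.single_apply, Matrix.one_apply]
  rw [dmxJ, this, Matrix.det_one]

theorem dmxJ_eq_zero (q : Jb m N) {v : Fin m → Jb m N} (b : Fin m) (hb : (v b).1 = 0) :
    dmxJ m N q v = 0 :=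
  Matrix.det_eq_zero_of_column_eq_zero b fun a => by simp [hb]

/-- On a frame `F` over the base, `∂_i ⌟ d_mx` is dual to `dxⁱ`. -/
theorem sum_dmxJ_cons_XdirJ {k : ℕ} (q : Jb (k + 1) N) {F : Fin (k + 1) → Jb (k + 1) N}
    (hF : ∀ b, (F b).1 = Pi.single b 1) (i : Fin (k + 1)) (c : Fin (k + 1) → ℝ) :
    ∑ j : Fin (k + 1), (-1 : ℝ) ^ (j : ℕ) * c j *
      dmxJ (k + 1) N q (Fin.cons (XdirJ (k + 1) N i) (F ∘ j.succAbove)) = c i := by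
  rw [Finset.sum_eq_single i]
  · have hperm : Matrix.of (fun a b =>
        ((Fin.cons (XdirJ (k + 1) N i) (F ∘ i.succAbove) : Fin (k + 1) → Jb (k + 1) N) b).1 a) =
        (1 : Matrix (Fin (k + 1)) (Fin (k + 1)) ℝ).submatrix id i.cycleRange.symm := by
      ext a b
      refine Fin.cases ?_ (fun r => ?_) b <;>
        simp [XdirJ, hF, Pi.single_apply, Matrix.one_apply]
    rw [dmxJ, hperm, Matrix.det_permute', Equiv.Perm.sign_symm, Fin.sign_cycleRange]
    simp only [Matrix.det_one, mul_one, Units.val_pow_eq_pow_val, Units.val_neg, Units.val_one,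
      Int.cast_pow, Int.cast_neg, Int.cast_one]
    rw [mul_comm, ← mul_assoc, ← pow_add, Even.neg_one_pow ⟨_, rfl⟩, one_mul]
  · intro j _ hji
    obtain ⟨r, hr⟩ := Fin.exists_succAbove_eq (Ne.symm hji)
    rw [dmxJ, Matrix.det_zero_of_column_eq (Fin.succ_ne_zero r)]
    · ring
    · intro a; simp [XdirJ, hF, hr]
  · simp

theorem duContr_eq_sum {k : ℕ} (α : Fin N) (i : Fin (k + 1)) (q : Jb (k + 1) N)
    (u : Fin (k + 1) → Jb (k + 1) N) :
    duContr (k + 1) N α i q u = ∑ j : Fin (k + 1), (-1 : ℝ) ^ (j : ℕ) * (u j).2.1 α *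
      dmxJ (k + 1) N q (Fin.cons (XdirJ (k + 1) N i) (u ∘ j.succAbove)) := by
  simp [duContr, iotaV, wedge1_cons, duJ, XdirJ]

theorem duContr_eq_of_frame {k : ℕ} (α : Fin N) (i : Fin (k + 1)) (q : Jb (k + 1) N)
    {F : Fin (k + 1) → Jb (k + 1) N} (hF : ∀ b, (F b).1 = Pi.single b 1) :
    duContr (k + 1) N α i q F = (F i).2.1 α := by
  rw [duContr_eq_sum, sum_dmxJ_cons_XdirJ q hF i fun j => (F j).2.1 α]

theorem duContr_cons {k : ℕ} (α : Fin N) (i : Fin (k + 1)) (q : Jb (k + 1) N)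
    {w : Jb (k + 1) N} (hw : w.1 = 0) (v : Fin k → Jb (k + 1) N) :
    duContr (k + 1) N α i q (Fin.cons w v) =
      w.2.1 α * dmxJ (k + 1) N q (Fin.cons (XdirJ (k + 1) N i) v) := by
  rw [duContr_eq_sum, Fin.sum_univ_succ, Finset.sum_eq_zero]
  · simp
  · intro r _
    cases k with
    | zero => exact r.elim0
    | succ k => rw [dmxJ_eq_zero q (Fin.succ 0) (by simp [hw]), mul_zero]

theorem wedge1_thJ_ThetaHc_cons_of_frame {k : ℕ} (H : Jb (k + 1) N → ℝ)
    (ϑ : (Fin (k + 1) → ℝ) → Fin (k + 1) → ℝ) (q : Jb (k + 1) N)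
    {F : Fin (k + 1) → Jb (k + 1) N} (hF : ∀ b, (F b).1 = Pi.single b 1)
    {w : Jb (k + 1) N} (hw : w.1 = 0) :
    wedge1 (thJ (k + 1) N ϑ) (ThetaHc (k + 1) N H) q (Fin.cons w F) =
      -∑ i, ∑ α, q.2.2 i α * w.2.1 α * ϑ q.1 i := by
  have hθw : thJ (k + 1) N ϑ q (fun _ => w) = 0 := by simp [thJ, hw]
  have hθF : ∀ j, thJ (k + 1) N ϑ q (fun _ => F j) = ϑ q.1 j := by
    intro j; simp [thJ, hF, Pi.single_apply]
  have hΘ : ∀ j : Fin (k + 1), ThetaHc (k + 1) N H q (Fin.cons w (F ∘ j.succAbove)) =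
      ∑ i, ∑ α, q.2.2 i α * w.2.1 α *
        dmxJ (k + 1) N q (Fin.cons (XdirJ (k + 1) N i) (F ∘ j.succAbove)) := by
    intro j
    rw [ThetaHc, dmxJ_eq_zero q 0 (by exact hw), mul_zero, zero_add]
    simp only [duContr_cons _ _ _ hw, mul_assoc]
  rw [wedge1_cons, hθw, zero_mul, zero_sub]
  simp only [hθF, hΘ, Finset.mul_sum]
  rw [Finset.sum_comm]
  refine congrArg _ (Finset.sum_congr rfl fun i _ => ?_)
  rw [Finset.sum_comm]
  refine Finset.sum_congr rfl fun α _ => ?_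
  rw [← sum_dmxJ_cons_XdirJ q hF i fun j => q.2.2 i α * w.2.1 α * ϑ q.1 j]
  exact Finset.sum_congr rfl fun j _ => by ring

theorem OmegaThH_cons_of_frame (H : Jb m N → ℝ) (ϑ : (Fin m → ℝ) → Fin m → ℝ) (q : Jb m N)
    {F : Fin m → Jb m N} (hF : ∀ b, (F b).1 = Pi.single b 1) {w : Jb m N} (hw : w.1 = 0) :
    OmegaThH m N H ϑ q (Fin.cons w F) = fderiv ℝ H q w
      - ∑ i, ∑ α, (w.2.2 i α * (F i).2.1 α - w.2.1 α * (F i).2.2 i α)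
      - ∑ i, ∑ α, q.2.2 i α * w.2.1 α * ϑ q.1 i := by
  cases m with
  | zero => simp [OmegaThH, OmegaH, wedge1, dFun, dmxJ, thJ]
  | succ k =>
    have hdH : wedge1 (dFun H) (dmxJ (k + 1) N) q (Fin.cons w F) = fderiv ℝ H q w := by
      rw [wedge1_cons, dmxJ_eq_one q hF,
        Finset.sum_eq_zero fun j _ => by rw [dmxJ_eq_zero q 0 hw, mul_zero]]
      simp [dFun]
    have hdp : ∀ i α, wedge1 (dpJ (k + 1) N i α) (duContr (k + 1) N α i) q (Fin.cons w F) =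
        w.2.2 i α * (F i).2.1 α - w.2.1 α * (F i).2.2 i α := by
      intro i α
      rw [wedge1_cons, duContr_eq_of_frame _ _ _ hF,
        ← sum_dmxJ_cons_XdirJ q hF i fun j => w.2.1 α * (F j).2.2 i α]
      simp only [duContr_cons _ _ _ hw]
      congr 1
      exact Finset.sum_congr rfl fun j _ => by simp only [dpJ]; ring
    simp only [OmegaThH, OmegaH, hdH, hdp, wedge1_thJ_ThetaHc_cons_of_frame H ϑ q hF hw]
    ring

theorem OmegaThH_cons_PdirJ (H : Jb m N → ℝ) (ϑ : (Fin m → ℝ) → Fin m → ℝ) (q : Jb m N)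
    {F : Fin m → Jb m N} (hF : ∀ b, (F b).1 = Pi.single b 1) (i : Fin m) (α : Fin N) :
    OmegaThH m N H ϑ q (Fin.cons (PdirJ m N i α) F) =
      fderiv ℝ H q (PdirJ m N i α) - (F i).2.1 α := by
  rw [OmegaThH_cons_of_frame H ϑ q hF rfl]
  simp [PdirJ, Pi.single_apply, ite_apply]

theorem OmegaThH_cons_UdirJ (H : Jb m N → ℝ) (ϑ : (Fin m → ℝ) → Fin m → ℝ) (q : Jb m N)
    {F : Fin m → Jb m N} (hF : ∀ b, (F b).1 = Pi.single b 1) (α : Fin N) :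
    OmegaThH m N H ϑ q (Fin.cons (UdirJ m N α) F) =
      fderiv ℝ H q (UdirJ m N α) + ∑ i, (F i).2.2 i α - ∑ i, q.2.2 i α * ϑ q.1 i := by
  rw [OmegaThH_cons_of_frame H ϑ q hF rfl]
  simp [UdirJ, Pi.single_apply]

theorem eq_sum_UdirJ_add_sum_PdirJ {w : Jb m N} (hw : w.1 = 0) :
    w = ∑ α, w.2.1 α • UdirJ m N α + ∑ i, ∑ α, w.2.2 i α • PdirJ m N i α := by
  refine Prod.ext ?_ (Prod.ext ?_ ?_)
  · simp [hw, UdirJ, PdirJ, Prod.fst_sum]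
  · ext β; simp [UdirJ, PdirJ, Prod.snd_sum, Prod.fst_sum, Finset.sum_apply, Pi.single_apply]
  · ext j β
    simp [UdirJ, PdirJ, Prod.snd_sum, Finset.sum_apply, Pi.single_apply]

theorem forall_cons_eq_zero_iff (A : Jb m N [⋀^Fin (m + 1)]→ₗ[ℝ] ℝ) {F : Fin m → Jb m N}
    (hF : ∀ b, (F b).1 = Pi.single b 1) :
    (∀ w, A (Fin.cons w F) = 0) ↔
      (∀ i α, A (Fin.cons (PdirJ m N i α) F) = 0) ∧ ∀ α, A (Fin.cons (UdirJ m N α) F) = 0 := by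
  refine ⟨fun h => ⟨fun i α => h _, fun α => h _⟩, fun ⟨hP, hU⟩ w => ?_⟩
  set ψ := A.toMultilinearMap.toLinearMap (Fin.cons 0 F) 0
  have hψ : ∀ w, ψ w = A (Fin.cons w F) := fun w => by simp [ψ]
  have hF0 : ∀ j, ψ (F j) = 0 := fun j => by
    rw [hψ]; exact A.map_eq_zero_of_eq _ (i := 0) (j := j.succ) (by simp) (Fin.succ_ne_zero j).symm
  -- `w - ∑ⱼ wʲ F_j` is vertical, and `A` vanishes on each `F_j` by alternation.
  set w' := w - ∑ j, w.1 j • F j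
  have hw' : w'.1 = 0 := by
    ext a; simp [w', Prod.fst_sum, Finset.sum_apply, hF, Pi.single_apply]
  have hw : w = ∑ j, w.1 j • F j + w' := by simp [w']
  rw [← hψ, hw, eq_sum_UdirJ_add_sum_PdirJ hw']
  simp only [map_add, map_sum, map_smul]
  simp [hF0, hψ, hP, hU]

theorem forall_OmegaThH_cons_eq_zero_iff (H : Jb m N → ℝ) (ϑ : (Fin m → ℝ) → Fin m → ℝ)
    (q : Jb m N) {F : Fin m → Jb m N} (hF : ∀ b, (F b).1 = Pi.single b 1) :
    (∀ w, OmegaThH m N H ϑ q (Fin.cons w F) = 0) ↔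
      (∀ i α, (F i).2.1 α = fderiv ℝ H q (PdirJ m N i α)) ∧
      ∀ α, ∑ i, (F i).2.2 i α = -fderiv ℝ H q (UdirJ m N α) + ∑ i, ϑ q.1 i * q.2.2 i α := by
  obtain ⟨A, hA⟩ := isAltAt_OmegaThH H ϑ q
  have hAF : ∀ w, OmegaThH m N H ϑ q (Fin.cons w F) = A (Fin.cons w F) := fun w => hA _
  simp only [hAF, forall_cons_eq_zero_iff A hF]
  simp only [← hAF, OmegaThH_cons_PdirJ H ϑ q hF, OmegaThH_cons_UdirJ H ϑ q hF,
    mul_comm (ϑ _ _)]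
  refine and_congr (forall₂_congr fun i α => ?_) (forall_congr' fun α => ?_) <;>
    constructor <;> intro h <;> linarith

theorem fderiv_secJ {φ : (Fin m → ℝ) → Fin N → ℝ} {P : (Fin m → ℝ) → Fin m → Fin N → ℝ}
    {x : Fin m → ℝ} (hφ : DifferentiableAt ℝ φ x) (hP : DifferentiableAt ℝ P x) (y : Fin m → ℝ) :
    fderiv ℝ (secJ m N φ P) x y = (y, fderiv ℝ φ x y, fderiv ℝ P x y) := by
  rw [show secJ m N φ P = fun x => (id x, φ x, P x) from rfl,
    ((hasFDerivAt_id x).prodMk (hφ.hasFDerivAt.prodMk hP.hasFDerivAt)).fderiv]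
  rfl

end Coordinates

theorem lcHDW_iff_pullback_contractions_vanish_general (m N : ℕ)
    (H : Jb m N → ℝ)
    (ϑ : (Fin m → ℝ) → Fin m → ℝ)
    (φ : (Fin m → ℝ) → Fin N → ℝ) (hφ : ContDiff ℝ (⊤ : ℕ∞) φ)
    (P : (Fin m → ℝ) → Fin m → Fin N → ℝ) (hP : ContDiff ℝ (⊤ : ℕ∞) P) :
    (∀ X : Jb m N → Jb m N, ContDiff ℝ (⊤ : ℕ∞) X →
      ∀ (x : Fin m → ℝ) (v : Fin m → Fin m → ℝ),
        pullC (secJ m N φ P) (iotaV X (OmegaThH m N H ϑ)) x v = 0) ↔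
    lcHDWeq m N H ϑ φ P := by
  have hsec : ∀ x y, fderiv ℝ (secJ m N φ P) x y = (y, fderiv ℝ φ x y, fderiv ℝ P x y) :=
    fun x => fderiv_secJ (hφ.differentiable (by simp) x) (hP.differentiable (by simp) x)
  rw [forall_pullC_iotaV_eq_zero_iff _ _ (isAltAt_OmegaThH H ϑ), lcHDWeq, ← forall_and]
  refine forall_congr' fun x => ?_
  rw [forall_OmegaThH_cons_eq_zero_iff H ϑ _ fun b => by rw [hsec]]
  simp only [hsec]
  rfl

/-- Coordinate locally conformal Hamilton–De Donder–Weyl theorem: for a closed 1-form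
`θ = ϑ_i(x)dxⁱ` and `(Ω_θ)_h = Ω_h + θ∧Θ_h`, a smooth section
`φ(x) = (xⁱ, φ^α(x), φⁱ_α(x))` of `J¹π* → ℝ^m` satisfies `φ*(ι_X (Ω_θ)_h) = 0` for every
smooth vector field `X` on `J¹π*` if and only if it satisfies the locally conformal HDW
equations `∂φ^α/∂xⁱ = (∂H/∂pⁱ_α)∘φ` and `∑ᵢ ∂φⁱ_α/∂xⁱ = −(∂H/∂u^α)∘φ + ϑ_i φⁱ_α`. -/
theorem lcHDW_iff_pullback_contractions_vanish (m N : ℕ)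
    (H : Jb m N → ℝ) (hH : ContDiff ℝ (⊤ : ℕ∞) H)
    (ϑ : (Fin m → ℝ) → Fin m → ℝ) (hϑ : ContDiff ℝ (⊤ : ℕ∞) ϑ)
    (hϑclosed : ClosedOneForm m ϑ)
    (φ : (Fin m → ℝ) → Fin N → ℝ) (hφ : ContDiff ℝ (⊤ : ℕ∞) φ)
    (P : (Fin m → ℝ) → Fin m → Fin N → ℝ) (hP : ContDiff ℝ (⊤ : ℕ∞) P) :
    (∀ X : Jb m N → Jb m N, ContDiff ℝ (⊤ : ℕ∞) X →
      ∀ (x : Fin m → ℝ) (v : Fin m → Fin m → ℝ),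
        pullC (secJ m N φ P) (iotaV X (OmegaThH m N H ϑ)) x v = 0) ↔
    lcHDWeq m N H ϑ φ P :=
  lcHDW_iff_pullback_contractions_vanish_general m N H ϑ φ hφ P hP
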